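/- arXiv:1509.08362 — 2 statements merged into one kernel-verified Lean document; each statement's English description precedes it below -/
import Mathlib

section
/- Let 𝒥 = (J_1,…,J_m) be a cover of I = {1,…,n} satisfying conditions (B1) and (B2). For each k let W^{J_k} have the Gibbs block structure for J_k, let ε ∈ [0,1), and let Ŵ^{J_k} have entries Ŵ^{J_k}_{i,j} = W^{J_k}_{i,j} + ε·1[i ∈ J_k and j ∈ J_k ∪ ∂J_k]. Set 𝒲̂ = Ŵ^{J_m}·Ŵ^{J_{m−1}}⋯Ŵ^{J_1}. Let J_{−k} = ⋃_{l≠k} J_l, L = max_k |J_k|, L_1 = max_{2≤k≤m} |J_{k−1} ∩ J_k|, λ = max_k max_{i ∈ I∖J_{−k}} W^{J_k}_{i,∂+J_k}/(1 − W^{J_k}_{i,∂−J_k}), λ' = max_{2≤k≤m} max_{i ∈ J_{k−1}∩J_k} (λ·W^{J_k}_{i,∂−J_k} + W^{J_k}_{i,∂+J_k}), W̄ = max_k max_{i∈J_k} Σ_{j∈∂J_k} W^{J_k}_{i,j}, W̃ = max_{2≤k≤m} max_{i ∈ J_k∖J_{k−1}} W^{J_k}_{i,∂−J_k}, and c = (L·max(W̄·max(λ,1),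 1) + 1 + λ)/(1 − (L_1+1)ε − W̃) (with the conventions W^{J_1}_{i,∂−J_1} = 0 and W^{J_m}_{i,∂+J_m} = 0). If W̃ + (L_1+1)ε < 1, then the row sums r_i = Σ_j 𝒲̂_{i,j} satisfy: r_i ≤ λ + c·ε if i ∈ I∖J_{−k} for some k ∈ {1,…,m}, and r_i ≤ λ' + 2c·ε if i ∈ J_{k−1} ∩ J_k for some k ∈ {2,…,m}. -/
open Finset

/-- The boundary `∂J` of a block `J ⊆ I`: indices outside `J` adjacent to `J`. -/
def bdry {n : ℕ} (J : Finset (Fin n)) : Finset (Fin n) :=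
  Finset.univ.filter fun t => t ∉ J ∧ ∃ s ∈ J, ((s : ℕ) = (t : ℕ) + 1 ∨ (t : ℕ) = (s : ℕ) + 1)

/-- `W` has the Gibbs block structure for block `J`: entries in `[0,1]`, rows outside `J`
are identity rows, and rows in `J` vanish outside `∂J`. -/
def GibbsBlock {n : ℕ} (J : Finset (Fin n)) (W : Matrix (Fin n) (Fin n) ℝ) : Prop :=
  (∀ i j, 0 ≤ W i j ∧ W i j ≤ 1) ∧
  (∀ i, i ∉ J → ∀ j, W i j = if i = j then 1 else 0) ∧
  (∀ i ∈ J, ∀ j, j ∉ bdry J → W i j = 0)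

/-- Maximum absolute row sum norm `‖A‖_∞`. -/
noncomputable def rowNorm {n : ℕ} (A : Matrix (Fin n) (Fin n) ℝ) : ℝ :=
  ⨆ i, ∑ j, |A i j|

/-- The list `[m, m-1, …, 1]`. -/
def descList (m : ℕ) : List ℕ := (List.range m).map fun i => m - i

/-- A block is a (nonempty) integer interval. -/
def IsIntervalBlock {n : ℕ} (J : Finset (Fin n)) : Prop :=
  J.Nonempty ∧ ∀ a ∈ J, ∀ b ∈ J, ∀ c : Fin n, a ≤ c → c ≤ b → c ∈ J

/-- Smallest index of a block (as a natural number). -/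
noncomputable def blockMin {n : ℕ} (J : Finset (Fin n)) : ℕ :=
  sInf {t : ℕ | ∃ s ∈ J, (s : ℕ) = t}

/-- Largest index of a block (as a natural number). -/
def blockMax {n : ℕ} (J : Finset (Fin n)) : ℕ := J.sup fun t => (t : ℕ)

/-- Condition (B1): blocks are intervals, ordered by their min and max elements. -/
def CondB1 {n : ℕ} (m : ℕ) (J : ℕ → Finset (Fin n)) : Prop :=
  (∀ k ∈ Finset.Icc 1 m, IsIntervalBlock (J k)) ∧
  ∀ j k, 1 ≤ j → j < k → k ≤ m →
    blockMin (J j) < blockMin (J k) ∧ blockMax (J j) < blockMax (J k)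

/-- Condition (B2): non-consecutive blocks are separated. -/
def CondB2 {n : ℕ} (m : ℕ) (J : ℕ → Finset (Fin n)) : Prop :=
  ∀ j k, 1 ≤ j → j + 2 ≤ k → k ≤ m → blockMax (J j) + 1 < blockMin (J k)

/-- Matrix entry addressed with integer indices; out-of-range indices give `0`. -/
noncomputable def entryZ {n : ℕ} (A : Matrix (Fin n) (Fin n) ℝ) (i j : ℤ) : ℝ :=
  if hi : 0 ≤ i ∧ i < (n : ℤ) then
    if hj : 0 ≤ j ∧ j < (n : ℤ) then A ⟨i.toNat, by omega⟩ ⟨j.toNat, by omega⟩ else 0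
  else 0

/-- `J_{-k} = ⋃_{l ≠ k} J_l`. -/
def Jminus {n : ℕ} (m : ℕ) (J : ℕ → Finset (Fin n)) (k : ℕ) : Finset (Fin n) :=
  ((Finset.Icc 1 m).erase k).biUnion J

/-- Left boundary entry `W^{J_k}_{i, ∂−J_k}`, with the conventions that it is `0` for the
first block `k = 1` and for nonexistent boundary points. -/
noncomputable def eL {n : ℕ} (m : ℕ) (J : ℕ → Finset (Fin n))
    (W : ℕ → Matrix (Fin n) (Fin n) ℝ) (k : ℕ) (i : Fin n) : ℝ :=
  if k = 1 then 0 else entryZ (W k) (i : ℤ) ((blockMin (J k) : ℤ) - 1)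

/-- Right boundary entry `W^{J_k}_{i, ∂+J_k}`, with the conventions that it is `0` for the
last block `k = m` and for nonexistent boundary points. -/
noncomputable def eR {n : ℕ} (m : ℕ) (J : ℕ → Finset (Fin n))
    (W : ℕ → Matrix (Fin n) (Fin n) ℝ) (k : ℕ) (i : Fin n) : ℝ :=
  if k = m then 0 else entryZ (W k) (i : ℤ) ((blockMax (J k) : ℤ) + 1)

/-- The ε-perturbed matrix `Ŵ^{J_k}`. -/
noncomputable def hatW {n : ℕ} (J : ℕ → Finset (Fin n))
    (W : ℕ → Matrix (Fin n) (Fin n) ℝ) (ε : ℝ) (k : ℕ) : Matrix (Fin n) (Fin n) ℝ :=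
  fun i j => W k i j + if i ∈ J k ∧ j ∈ J k ∪ bdry (J k) then ε else 0


/-! ### Auxiliary lemmas -/

lemma descList_succ (m : ℕ) : descList (m + 1) = (m + 1) :: descList m := by
  simp [descList, List.range_succ_eq_map, List.map_map, Function.comp_def, Nat.succ_sub_succ]

lemma bdd_helper {n : ℕ} (m : ℕ) (f : ℕ → Fin n → ℝ) (S : Set ℝ)
    (h : ∀ x ∈ S, ∃ k, k ≤ m ∧ ∃ i : Fin n, x = f k i) : BddAbove S := by
  have hsub : S ⊆ (fun p : Fin (m + 1) × Fin n => f p.1 p.2) '' Set.univ := by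
    rintro x hx
    obtain ⟨k, hk, i, rfl⟩ := h x hx
    exact ⟨(⟨k, by omega⟩, i), trivial, rfl⟩
  exact ((Set.finite_univ.image _).subset hsub).bddAbove

lemma blockMin_le {n : ℕ} {J : Finset (Fin n)} {s : Fin n} (hs : s ∈ J) :
    blockMin J ≤ (s : ℕ) := Nat.sInf_le ⟨s, hs, rfl⟩

lemma blockMin_mem {n : ℕ} {J : Finset (Fin n)} (h : J.Nonempty) :
    ∃ s ∈ J, (s : ℕ) = blockMin J := by
  obtain ⟨s, hs⟩ := h
  exact Nat.sInf_mem (⟨(s : ℕ), s, hs, rfl⟩ : Set.Nonempty {t : ℕ | ∃ s ∈ J, (s : ℕ) = t})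

lemma le_blockMax {n : ℕ} {J : Finset (Fin n)} {s : Fin n} (hs : s ∈ J) :
    (s : ℕ) ≤ blockMax J := Finset.le_sup hs

lemma blockMax_mem {n : ℕ} {J : Finset (Fin n)} (h : J.Nonempty) :
    ∃ s ∈ J, (s : ℕ) = blockMax J := by
  obtain ⟨s, hs, h2⟩ := Finset.exists_mem_eq_sup J h fun t : Fin n => (t : ℕ)
  exact ⟨s, hs, h2.symm⟩

/-- The vector obtained by applying the first `k` (perturbed) block updates to `𝟙`. -/
noncomputable def uvec {n : ℕ} (J : ℕ → Finset (Fin n)) (W : ℕ → Matrix (Fin n) (Fin n) ℝ)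
    (ε : ℝ) : ℕ → Fin n → ℝ
  | 0 => fun _ => 1
  | (k + 1) => fun i => ∑ j, hatW J W ε (k + 1) i j * uvec J W ε k j

lemma uvec_eq {n : ℕ} (J : ℕ → Finset (Fin n)) (W : ℕ → Matrix (Fin n) (Fin n) ℝ)
    (ε : ℝ) (k : ℕ) :
    (((descList k).map (hatW J W ε)).prod).mulVec (fun _ => 1) = uvec J W ε k := by
  induction k with
  | zero => simp [descList, uvec]
  | succ k ih =>
      rw [descList_succ, List.map_cons, List.prod_cons, ← Matrix.mulVec_mulVec, ih]
      rfl

lemma sum_prod_eq_uvec {n : ℕ} (J : ℕ → Finset (Fin n)) (W : ℕ → Matrix (Fin n) (Fin n) ℝ)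
    (ε : ℝ) (k : ℕ) (i : Fin n) :
    ∑ j, (((descList k).map (hatW J W ε)).prod) i j = uvec J W ε k i := by
  rw [← uvec_eq]
  simp [Matrix.mulVec, dotProduct]

theorem stmt7 {n m : ℕ} (hn : 1 ≤ n) (hm : 1 ≤ m)
    (J : ℕ → Finset (Fin n)) (W : ℕ → Matrix (Fin n) (Fin n) ℝ)
    (hcover : ∀ i : Fin n, ∃ k ∈ Finset.Icc 1 m, i ∈ J k)
    (hB1 : CondB1 m J) (hB2 : CondB2 m J)
    (hblock : ∀ k ∈ Finset.Icc 1 m, GibbsBlock (J k) (W k))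
    (ε : ℝ) (hε0 : 0 ≤ ε) (hε1 : ε < 1)
    (lam lam' Wbar Wtil c : ℝ) (L L1 : ℕ)
    (hlam : lam = sSup {x : ℝ | ∃ k ∈ Finset.Icc 1 m, ∃ i : Fin n,
      i ∉ Jminus m J k ∧ x = eR m J W k i / (1 - eL m J W k i)})
    (hlam' : lam' = sSup {x : ℝ | ∃ k ∈ Finset.Icc 2 m, ∃ i : Fin n,
      i ∈ J (k - 1) ∩ J k ∧ x = lam * eL m J W k i + eR m J W k i})
    (hWbar : Wbar = sSup {x : ℝ | ∃ k ∈ Finset.Icc 1 m, ∃ i ∈ J k,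
      x = ∑ j ∈ bdry (J k), W k i j})
    (hWtil : Wtil = sSup {x : ℝ | ∃ k ∈ Finset.Icc 2 m, ∃ i : Fin n,
      i ∈ J k ∧ i ∉ J (k - 1) ∧ x = eL m J W k i})
    (hL : L = (Finset.Icc 1 m).sup fun k => (J k).card)
    (hL1 : L1 = (Finset.Icc 2 m).sup fun k => (J (k - 1) ∩ J k).card)
    (hc : c = ((L : ℝ) * max (Wbar * max lam 1) 1 + 1 + lam) /
      (1 - ((L1 : ℝ) + 1) * ε - Wtil))
    (hsmall : Wtil + ((L1 : ℝ) + 1) * ε < 1) :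
    (∀ k ∈ Finset.Icc 1 m, ∀ i : Fin n, i ∉ Jminus m J k →
      ∑ j, (((descList m).map (hatW J W ε)).prod) i j ≤ lam + c * ε) ∧
    (∀ k ∈ Finset.Icc 2 m, ∀ i ∈ J (k - 1) ∩ J k,
      ∑ j, (((descList m).map (hatW J W ε)).prod) i j ≤ lam' + 2 * c * ε) := by
  obtain ⟨hInt, hOrd⟩ := hB1
  have hW01 : ∀ k, 1 ≤ k → k ≤ m → ∀ i j, 0 ≤ W k i j ∧ W k i j ≤ 1 :=
    fun k h1 h2 => (hblock k (Finset.mem_Icc.mpr ⟨h1, h2⟩)).1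
  have hWid : ∀ k, 1 ≤ k → k ≤ m → ∀ i, i ∉ J k → ∀ j, W k i j = if i = j then 1 else 0 :=
    fun k h1 h2 => (hblock k (Finset.mem_Icc.mpr ⟨h1, h2⟩)).2.1
  have hWbd : ∀ k, 1 ≤ k → k ≤ m → ∀ i ∈ J k, ∀ j, j ∉ bdry (J k) → W k i j = 0 :=
    fun k h1 h2 => (hblock k (Finset.mem_Icc.mpr ⟨h1, h2⟩)).2.2
  have hne : ∀ k, 1 ≤ k → k ≤ m → (J k).Nonempty :=
    fun k h1 h2 => (hInt k (Finset.mem_Icc.mpr ⟨h1, h2⟩)).1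
  have hmem : ∀ k, 1 ≤ k → k ≤ m → ∀ i : Fin n,
      i ∈ J k ↔ (blockMin (J k) ≤ (i : ℕ) ∧ (i : ℕ) ≤ blockMax (J k)) := by
    intro k h1 h2 i
    constructor
    · intro hi; exact ⟨blockMin_le hi, le_blockMax hi⟩
    · rintro ⟨hai, hib⟩
      obtain ⟨s, hs, hsv⟩ := blockMin_mem (hne k h1 h2)
      obtain ⟨t, ht, htv⟩ := blockMax_mem (hne k h1 h2)
      exact (hInt k (Finset.mem_Icc.mpr ⟨h1, h2⟩)).2 s hs t ht i
        (by rw [Fin.le_def]; omega) (by rw [Fin.le_def]; omega)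
  have hbn : ∀ k, 1 ≤ k → k ≤ m → blockMax (J k) < n := by
    intro k h1 h2
    obtain ⟨t, ht, htv⟩ := blockMax_mem (hne k h1 h2)
    have := t.isLt; omega
  have hab : ∀ k, 1 ≤ k → k ≤ m → blockMin (J k) ≤ blockMax (J k) := by
    intro k h1 h2
    obtain ⟨s, hs, hsv⟩ := blockMin_mem (hne k h1 h2)
    have := le_blockMax hs; omega
  have hmonoa : ∀ j k, 1 ≤ j → j < k → k ≤ m → blockMin (J j) < blockMin (J k) :=
    fun j k h1 h2 h3 => (hOrd j k h1 h2 h3).1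
  have hmonob : ∀ j k, 1 ≤ j → j < k → k ≤ m → blockMax (J j) < blockMax (J k) :=
    fun j k h1 h2 h3 => (hOrd j k h1 h2 h3).2
  have ha1 : blockMin (J 1) = 0 := by
    obtain ⟨l, hl, hil⟩ := hcover ⟨0, by omega⟩
    rw [Finset.mem_Icc] at hl
    have h0 : blockMin (J l) ≤ 0 := blockMin_le hil
    rcases eq_or_lt_of_le hl.1 with h | h
    · rw [← h] at h0; omega
    · have := hmonoa 1 l le_rfl h hl.2; omega
  have hbm : blockMax (J m) + 1 = n := by
    obtain ⟨l, hl, hil⟩ := hcover ⟨n - 1, by omega⟩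
    rw [Finset.mem_Icc] at hl
    have h0 : n - 1 ≤ blockMax (J l) := le_blockMax hil
    have h1 : blockMax (J m) < n := hbn m hm le_rfl
    rcases eq_or_lt_of_le hl.2 with h | h
    · rw [h] at h0; omega
    · have := hmonob l m hl.1 h le_rfl; omega
  have hglue : ∀ k, 2 ≤ k → k ≤ m →
      1 ≤ blockMin (J k) ∧ blockMin (J k) ≤ blockMax (J (k - 1)) + 1 := by
    intro k h2 hk
    have hak1 : 1 ≤ blockMin (J k) := by
      have := hmonoa 1 k le_rfl (by omega) hk; omega
    refine ⟨hak1, ?_⟩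
    have hlt : blockMin (J k) - 1 < n := by
      have := hab k (by omega) hk; have := hbn k (by omega) hk; omega
    obtain ⟨l, hl, hil⟩ := hcover ⟨blockMin (J k) - 1, hlt⟩
    rw [Finset.mem_Icc] at hl
    have hal : blockMin (J l) ≤ blockMin (J k) - 1 := blockMin_le hil
    have hbl : blockMin (J k) - 1 ≤ blockMax (J l) := le_blockMax hil
    have hlk : l < k := by
      by_contra h
      push_neg at h
      rcases eq_or_lt_of_le h with h' | h'
      · rw [h'] at hak1; rw [h'] at hal; omega
      · have := hmonoa k l (by omega) h' hl.2; omega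
    have hble : blockMax (J l) ≤ blockMax (J (k - 1)) := by
      rcases eq_or_lt_of_le (show l ≤ k - 1 by omega) with h' | h'
      · rw [h']
      · exact le_of_lt (hmonob l (k - 1) hl.1 h' (by omega))
    omega
  have hbdry : ∀ k, 1 ≤ k → k ≤ m → ∀ t : Fin n,
      t ∈ bdry (J k) ↔ ((t : ℕ) + 1 = blockMin (J k) ∨ (t : ℕ) = blockMax (J k) + 1) := by
    intro k h1 h2 t
    rw [bdry, Finset.mem_filter]
    simp only [Finset.mem_univ, true_and]
    constructor
    · rintro ⟨htJ, s, hs, hcase⟩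
      have hsJ := (hmem k h1 h2 s).1 hs
      have htJ' : ¬(blockMin (J k) ≤ (t : ℕ) ∧ (t : ℕ) ≤ blockMax (J k)) :=
        fun hcon => htJ ((hmem k h1 h2 t).2 hcon)
      omega
    · intro hcase
      rcases hcase with h | h
      · obtain ⟨s, hs, hsv⟩ := blockMin_mem (hne k h1 h2)
        refine ⟨?_, s, hs, Or.inl (by omega)⟩
        intro htJ
        have := (hmem k h1 h2 t).1 htJ
        omega
      · obtain ⟨s, hs, hsv⟩ := blockMax_mem (hne k h1 h2)
        refine ⟨?_, s, hs, Or.inr (by omega)⟩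
        intro htJ
        have := (hmem k h1 h2 t).1 htJ
        omega
  -- boundary entries
  have heLval : ∀ k, 1 ≤ k → k ≤ m → ∀ i : Fin n, ∀ j : Fin n, (j : ℕ) + 1 = blockMin (J k) →
      W k i j = eL m J W k i := by
    intro k h1 h2 i j hj
    have hk1 : k ≠ 1 := by
      intro h; rw [h] at hj; omega
    have hin := i.isLt
    have hjn := j.isLt
    rw [eL, if_neg hk1, entryZ, dif_pos (by constructor <;> [omega; exact_mod_cast hin]),
      dif_pos (by constructor <;> omega)]
    congr 1 <;> apply Fin.ext <;> simp <;> omega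
  have heRval : ∀ k, 1 ≤ k → k ≤ m → ∀ i : Fin n, ∀ j : Fin n, (j : ℕ) = blockMax (J k) + 1 →
      W k i j = eR m J W k i := by
    intro k h1 h2 i j hj
    have hjn := j.isLt
    have hkm : k ≠ m := by
      intro h; rw [h] at hj; omega
    have hin := i.isLt
    rw [eR, if_neg hkm, entryZ, dif_pos (by constructor <;> [omega; exact_mod_cast hin]),
      dif_pos (by constructor <;> omega)]
    congr 1 <;> apply Fin.ext <;> simp <;> omega
  have heL01 : ∀ k, 1 ≤ k → k ≤ m → ∀ i, 0 ≤ eL m J W k i ∧ eL m J W k i ≤ 1 := by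
    intro k h1 h2 i
    rw [eL]
    split
    · exact ⟨le_rfl, zero_le_one⟩
    · rw [entryZ]
      split
      · split
        · exact hW01 k h1 h2 _ _
        · exact ⟨le_rfl, zero_le_one⟩
      · exact ⟨le_rfl, zero_le_one⟩
  have heR01 : ∀ k, 1 ≤ k → k ≤ m → ∀ i, 0 ≤ eR m J W k i ∧ eR m J W k i ≤ 1 := by
    intro k h1 h2 i
    rw [eR]
    split
    · exact ⟨le_rfl, zero_le_one⟩
    · rw [entryZ]
      split
      · split
        · exact hW01 k h1 h2 _ _
        · exact ⟨le_rfl, zero_le_one⟩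
      · exact ⟨le_rfl, zero_le_one⟩
  -- the two (possibly empty) halves of the boundary
  have hfLcard : ∀ k : ℕ,
      (Finset.univ.filter fun t : Fin n => (t : ℕ) + 1 = blockMin (J k)).card ≤ 1 := by
    intro k
    apply Finset.card_le_one.mpr
    intro x hx y hy
    rw [Finset.mem_filter] at hx hy
    apply Fin.ext; omega
  have hfRcard : ∀ k : ℕ,
      (Finset.univ.filter fun t : Fin n => (t : ℕ) = blockMax (J k) + 1).card ≤ 1 := by
    intro k
    apply Finset.card_le_one.mpr
    intro x hx y hy
    rw [Finset.mem_filter] at hx hy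
    apply Fin.ext; omega
  have hbdry_union : ∀ k, 1 ≤ k → k ≤ m → bdry (J k) =
      (Finset.univ.filter fun t : Fin n => (t : ℕ) + 1 = blockMin (J k)) ∪
      (Finset.univ.filter fun t : Fin n => (t : ℕ) = blockMax (J k) + 1) := by
    intro k h1 h2
    ext t
    rw [hbdry k h1 h2 t, Finset.mem_union, Finset.mem_filter, Finset.mem_filter]
    simp
  have hdisjLR : ∀ k, 1 ≤ k → k ≤ m →
      Disjoint (Finset.univ.filter fun t : Fin n => (t : ℕ) + 1 = blockMin (J k))
        (Finset.univ.filter fun t : Fin n => (t : ℕ) = blockMax (J k) + 1) := by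
    intro k h1 h2
    rw [Finset.disjoint_left]
    intro t ht ht'
    rw [Finset.mem_filter] at ht ht'
    have := hab k h1 h2
    omega
  have hdisjJbd : ∀ k, Disjoint (J k) (bdry (J k)) := by
    intro k
    rw [Finset.disjoint_right]
    intro t ht
    rw [bdry, Finset.mem_filter] at ht
    exact ht.2.1
  -- row formulas
  have hrowW : ∀ k, 1 ≤ k → k ≤ m → ∀ i ∈ J k, ∀ v : Fin n → ℝ,
      ∑ j, W k i j * v j =
        eL m J W k i * (∑ j ∈ Finset.univ.filter fun t : Fin n => (t : ℕ) + 1 = blockMin (J k), v j) +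
        eR m J W k i * (∑ j ∈ Finset.univ.filter fun t : Fin n => (t : ℕ) = blockMax (J k) + 1, v j) := by
    intro k h1 h2 i hi v
    have hsub : ∑ j ∈ bdry (J k), W k i j * v j = ∑ j, W k i j * v j := by
      apply Finset.sum_subset (Finset.subset_univ _)
      intro j _ hj
      rw [hWbd k h1 h2 i hi j hj, zero_mul]
    rw [← hsub, hbdry_union k h1 h2, Finset.sum_union (hdisjLR k h1 h2)]
    congr 1
    · rw [Finset.mul_sum]
      apply Finset.sum_congr rfl
      intro j hj
      rw [Finset.mem_filter] at hj
      rw [heLval k h1 h2 i j hj.2]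
    · rw [Finset.mul_sum]
      apply Finset.sum_congr rfl
      intro j hj
      rw [Finset.mem_filter] at hj
      rw [heRval k h1 h2 i j hj.2]
  have hrowHat : ∀ k, 1 ≤ k → k ≤ m → ∀ i ∈ J k, ∀ v : Fin n → ℝ,
      ∑ j, hatW J W ε k i j * v j =
        eL m J W k i * (∑ j ∈ Finset.univ.filter fun t : Fin n => (t : ℕ) + 1 = blockMin (J k), v j) +
        eR m J W k i * (∑ j ∈ Finset.univ.filter fun t : Fin n => (t : ℕ) = blockMax (J k) + 1, v j) +
        ε * ∑ j ∈ J k ∪ bdry (J k), v j := by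
    intro k h1 h2 i hi v
    have hterm : ∀ j : Fin n, hatW J W ε k i j * v j =
        W k i j * v j + (if j ∈ J k ∪ bdry (J k) then ε * v j else 0) := by
      intro j
      show (W k i j + if i ∈ J k ∧ j ∈ J k ∪ bdry (J k) then ε else 0) * v j = _
      by_cases hj : j ∈ J k ∪ bdry (J k)
      · rw [if_pos ⟨hi, hj⟩, if_pos hj]; ring
      · rw [if_neg (fun hcon => hj hcon.2), if_neg hj]; ring
    rw [Finset.sum_congr rfl fun j _ => hterm j, Finset.sum_add_distrib, hrowW k h1 h2 i hi v,
      Finset.sum_ite_mem, Finset.univ_inter, ← Finset.mul_sum]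
  have hrowId : ∀ k, 1 ≤ k → k ≤ m → ∀ i, i ∉ J k → ∀ v : Fin n → ℝ,
      ∑ j, hatW J W ε k i j * v j = v i := by
    intro k h1 h2 i hi v
    have hterm : ∀ j : Fin n, hatW J W ε k i j * v j = if i = j then v j else 0 := by
      intro j
      show (W k i j + if i ∈ J k ∧ j ∈ J k ∪ bdry (J k) then ε else 0) * v j = _
      have hcond : ¬(i ∈ J k ∧ j ∈ J k ∪ bdry (J k)) := fun hcon => hi hcon.1
      rw [hWid k h1 h2 i hi j, if_neg hcond]
      by_cases h : i = j
      · rw [if_pos h, if_pos h]; ring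
      · rw [if_neg h, if_neg h]; ring
    rw [Finset.sum_congr rfl fun j _ => hterm j, Finset.sum_ite_eq]
    simp
  -- sSup machinery
  have hJm : ∀ (k : ℕ) (i : Fin n), i ∉ Jminus m J k ↔
      ∀ l, 1 ≤ l → l ≤ m → l ≠ k → i ∉ J l := by
    intro k i
    constructor
    · intro h l h1 h2 hlk hil
      exact h (Finset.mem_biUnion.mpr ⟨l, Finset.mem_erase.mpr ⟨hlk, Finset.mem_Icc.mpr ⟨h1, h2⟩⟩, hil⟩)
    · intro h hmem'
      obtain ⟨l, hl, hil⟩ := Finset.mem_biUnion.mp hmem'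
      obtain ⟨hlk, hl'⟩ := Finset.mem_erase.mp hl
      rw [Finset.mem_Icc] at hl'
      exact h l hl'.1 hl'.2 hlk hil
  have hlamBdd : BddAbove {x : ℝ | ∃ k ∈ Finset.Icc 1 m, ∃ i : Fin n,
      i ∉ Jminus m J k ∧ x = eR m J W k i / (1 - eL m J W k i)} := by
    apply bdd_helper m (fun k i => eR m J W k i / (1 - eL m J W k i))
    rintro x ⟨k, hk, i, _, rfl⟩
    exact ⟨k, (Finset.mem_Icc.mp hk).2, i, rfl⟩
  have hlam'Bdd : BddAbove {x : ℝ | ∃ k ∈ Finset.Icc 2 m, ∃ i : Fin n,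
      i ∈ J (k - 1) ∩ J k ∧ x = lam * eL m J W k i + eR m J W k i} := by
    apply bdd_helper m (fun k i => lam * eL m J W k i + eR m J W k i)
    rintro x ⟨k, hk, i, _, rfl⟩
    exact ⟨k, (Finset.mem_Icc.mp hk).2, i, rfl⟩
  have hWbarBdd : BddAbove {x : ℝ | ∃ k ∈ Finset.Icc 1 m, ∃ i ∈ J k,
      x = ∑ j ∈ bdry (J k), W k i j} := by
    apply bdd_helper m (fun k i => ∑ j ∈ bdry (J k), W k i j)
    rintro x ⟨k, hk, i, _, rfl⟩
    exact ⟨k, (Finset.mem_Icc.mp hk).2, i, rfl⟩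
  have hWtilBdd : BddAbove {x : ℝ | ∃ k ∈ Finset.Icc 2 m, ∃ i : Fin n,
      i ∈ J k ∧ i ∉ J (k - 1) ∧ x = eL m J W k i} := by
    apply bdd_helper m (fun k i => eL m J W k i)
    rintro x ⟨k, hk, i, _, _, rfl⟩
    exact ⟨k, (Finset.mem_Icc.mp hk).2, i, rfl⟩
  have hlam_ge : ∀ k, 1 ≤ k → k ≤ m → ∀ i : Fin n, i ∉ Jminus m J k →
      eR m J W k i / (1 - eL m J W k i) ≤ lam := by
    intro k h1 h2 i hi
    rw [hlam]
    exact le_csSup hlamBdd ⟨k, Finset.mem_Icc.mpr ⟨h1, h2⟩, i, hi, rfl⟩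
  have hlam'_ge : ∀ k, 2 ≤ k → k ≤ m → ∀ i : Fin n, i ∈ J (k - 1) → i ∈ J k →
      lam * eL m J W k i + eR m J W k i ≤ lam' := by
    intro k h1 h2 i hi1 hi2
    rw [hlam']
    exact le_csSup hlam'Bdd ⟨k, Finset.mem_Icc.mpr ⟨h1, h2⟩, i, Finset.mem_inter.mpr ⟨hi1, hi2⟩, rfl⟩
  have hWbar_ge : ∀ k, 1 ≤ k → k ≤ m → ∀ i ∈ J k,
      (∑ j ∈ bdry (J k), W k i j) ≤ Wbar := by
    intro k h1 h2 i hi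
    rw [hWbar]
    exact le_csSup hWbarBdd ⟨k, Finset.mem_Icc.mpr ⟨h1, h2⟩, i, hi, rfl⟩
  have hWtil_ge : ∀ k, 2 ≤ k → k ≤ m → ∀ i : Fin n, i ∈ J k → i ∉ J (k - 1) →
      eL m J W k i ≤ Wtil := by
    intro k h1 h2 i hi1 hi2
    rw [hWtil]
    exact le_csSup hWtilBdd ⟨k, Finset.mem_Icc.mpr ⟨h1, h2⟩, i, hi1, hi2, rfl⟩
  have hlam0 : 0 ≤ lam := by
    obtain ⟨s, hs, hsv⟩ := blockMax_mem (hne m hm le_rfl)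
    have hsonly : s ∉ Jminus m J m := by
      rw [hJm]
      intro l h1 h2 hlm hsl
      have := hmonob l m h1 (lt_of_le_of_ne h2 hlm) le_rfl
      have := le_blockMax hsl
      omega
    have h0 : eR m J W m s / (1 - eL m J W m s) = 0 := by
      rw [eR, if_pos rfl, zero_div]
    rw [hlam]
    exact le_csSup hlamBdd ⟨m, Finset.mem_Icc.mpr ⟨hm, le_rfl⟩, s, hsonly, h0.symm⟩
  have hWtil0 : 0 ≤ Wtil := by
    by_cases hS : ({x : ℝ | ∃ k ∈ Finset.Icc 2 m, ∃ i : Fin n,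
        i ∈ J k ∧ i ∉ J (k - 1) ∧ x = eL m J W k i}).Nonempty
    · obtain ⟨x, hx⟩ := hS
      obtain ⟨k, hk, i, hi1, hi2, hxv⟩ := hx
      rw [Finset.mem_Icc] at hk
      have h0 : 0 ≤ x := hxv ▸ (heL01 k (by omega) hk.2 i).1
      refine le_trans h0 ?_
      rw [hWtil]
      exact le_csSup hWtilBdd ⟨k, Finset.mem_Icc.mpr hk, i, hi1, hi2, hxv⟩
    · rw [hWtil, Set.not_nonempty_iff_eq_empty.mp hS, Real.sSup_empty]
  -- constants
  have hL1e : 0 ≤ ((L1 : ℝ) + 1) * ε := by positivity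
  have hWtil1 : Wtil < 1 := by linarith
  have hD : 0 < 1 - ((L1 : ℝ) + 1) * ε - Wtil := by linarith
  have hMh1 : (1 : ℝ) ≤ max (Wbar * max lam 1) 1 := le_max_right _ _
  have hc0 : 0 ≤ c := by
    rw [hc]
    apply div_nonneg _ (le_of_lt hD)
    have h0 : (0:ℝ) ≤ (L : ℝ) * max (Wbar * max lam 1) 1 :=
      mul_nonneg (Nat.cast_nonneg L) (by linarith)
    linarith
  have hcD : c * (1 - ((L1 : ℝ) + 1) * ε - Wtil) =
      (L : ℝ) * max (Wbar * max lam 1) 1 + 1 + lam := by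
    rw [hc]
    exact div_mul_cancel₀ _ (ne_of_gt hD)
  have hcardL : ∀ k, 1 ≤ k → k ≤ m → (J k).card ≤ L :=
    fun k h1 h2 => hL ▸ Finset.le_sup (f := fun k => (J k).card) (Finset.mem_Icc.mpr ⟨h1, h2⟩)
  have hcardL1 : ∀ k, 2 ≤ k → k ≤ m → (J (k - 1) ∩ J k).card ≤ L1 :=
    fun k h1 h2 => hL1 ▸ Finset.le_sup (f := fun k => (J (k - 1) ∩ J k).card) (Finset.mem_Icc.mpr ⟨h1, h2⟩)
  -- eL + eR bounded by Wbar for rows in the block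
  have hpLmem : ∀ k, 2 ≤ k → k ≤ m → ∃ p : Fin n,
      p ∈ Finset.univ.filter fun t : Fin n => (t : ℕ) + 1 = blockMin (J k) := by
    intro k h2 hk
    have hg := hglue k h2 hk
    have hlt : blockMin (J k) - 1 < n :=
      lt_of_le_of_lt (le_trans (by omega) (hab k (by omega) hk)) (hbn k (by omega) hk)
    exact ⟨⟨blockMin (J k) - 1, hlt⟩, Finset.mem_filter.mpr ⟨Finset.mem_univ _, by simp; omega⟩⟩
  have hpRmem : ∀ k, 1 ≤ k → k < m → ∃ p : Fin n,
      p ∈ Finset.univ.filter fun t : Fin n => (t : ℕ) = blockMax (J k) + 1 := by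
    intro k h1 hk
    have hlt : blockMax (J k) + 1 < n := by
      have := hmonob k m h1 hk le_rfl; omega
    exact ⟨⟨blockMax (J k) + 1, hlt⟩, Finset.mem_filter.mpr ⟨Finset.mem_univ _, by simp⟩⟩
  have hsumLR : ∀ k, 1 ≤ k → k ≤ m → ∀ i ∈ J k,
      eL m J W k i + eR m J W k i ≤ Wbar := by
    intro k h1 h2 i hi
    have hsplit : ∑ j ∈ bdry (J k), W k i j =
        (∑ j ∈ Finset.univ.filter fun t : Fin n => (t : ℕ) + 1 = blockMin (J k), W k i j) +
        (∑ j ∈ Finset.univ.filter fun t : Fin n => (t : ℕ) = blockMax (J k) + 1, W k i j) := by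
      rw [hbdry_union k h1 h2, Finset.sum_union (hdisjLR k h1 h2)]
    have hLle : eL m J W k i ≤
        ∑ j ∈ Finset.univ.filter fun t : Fin n => (t : ℕ) + 1 = blockMin (J k), W k i j := by
      by_cases hk1 : k = 1
      · rw [eL, if_pos hk1]
        exact Finset.sum_nonneg fun j _ => (hW01 k h1 h2 i j).1
      · obtain ⟨p, hp⟩ := hpLmem k (by omega) h2
        have hpv : (p : ℕ) + 1 = blockMin (J k) := (Finset.mem_filter.mp hp).2
        rw [← heLval k h1 h2 i p hpv]
        exact Finset.single_le_sum (fun j _ => (hW01 k h1 h2 i j).1) hp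
    have hRle : eR m J W k i ≤
        ∑ j ∈ Finset.univ.filter fun t : Fin n => (t : ℕ) = blockMax (J k) + 1, W k i j := by
      by_cases hkm : k = m
      · rw [eR, if_pos hkm]
        exact Finset.sum_nonneg fun j _ => (hW01 k h1 h2 i j).1
      · obtain ⟨p, hp⟩ := hpRmem k h1 (by omega)
        have hpv : (p : ℕ) = blockMax (J k) + 1 := (Finset.mem_filter.mp hp).2
        rw [← heRval k h1 h2 i p hpv]
        exact Finset.single_le_sum (fun j _ => (hW01 k h1 h2 i j).1) hp
    have := hWbar_ge k h1 h2 i hi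
    linarith
  set Mh : ℝ := max (Wbar * max lam 1) 1 with hMhdef
  have hlce : 0 ≤ lam + c * ε := add_nonneg hlam0 (mul_nonneg hc0 hε0)
  have huS : ∀ (k : ℕ) (i : Fin n),
      uvec J W ε (k + 1) i = ∑ j, hatW J W ε (k + 1) i j * uvec J W ε k j := fun _ _ => rfl
  have main : ∀ k, k ≤ m →
      ((∀ i : Fin n, (∀ l, 1 ≤ l → l ≤ k → i ∉ J l) → uvec J W ε k i = 1) ∧
       (∀ i : Fin n, 0 ≤ uvec J W ε k i) ∧
       (∀ i ∈ J k, (k = 1 ∨ i ∉ J (k - 1)) → uvec J W ε k i ≤ Mh + c * ε) ∧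
       (∀ l, 1 ≤ l → l ≤ k → ∀ i ∈ J l,
          (∀ l', 1 ≤ l' → l' ≤ m → l' ≠ l → i ∉ J l') → uvec J W ε k i ≤ lam + c * ε) ∧
       (∀ l, 2 ≤ l → l ≤ k → ∀ i : Fin n, i ∈ J (l - 1) → i ∈ J l →
          uvec J W ε k i ≤ lam' + 2 * c * ε)) := by
    intro k
    induction k with
    | zero =>
      intro _
      refine ⟨fun i _ => rfl, fun i => zero_le_one, ?_, by omega, by omega⟩
      intro i hi hcase
      -- k = 0 : i ∈ J 0 with 0 = 1 ∨ i ∉ J (0-1); impossible branch handled by case 0 = 1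
      rcases hcase with h | h
      · omega
      · -- here l = 0 with i ∈ J 0 and i ∉ J (0-1) = J 0 : contradiction
        exact absurd hi h
    | succ k IH =>
      intro hkm
      obtain ⟨ih1, ih2, ih3, ih4, ih5⟩ := IH (by omega)
      have hK1 : 1 ≤ k + 1 := by omega
      -- ΣfR : right boundary value ≤ 1
      have hfRu : ∀ j ∈ (Finset.univ.filter fun t : Fin n => (t : ℕ) = blockMax (J (k+1)) + 1),
          uvec J W ε k j = 1 := by
        intro j hj
        have hjv : (j : ℕ) = blockMax (J (k+1)) + 1 := (Finset.mem_filter.mp hj).2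
        apply ih1
        intro l h1 h2 hjl
        have := hmonob l (k+1) h1 (by omega) hkm
        have := le_blockMax hjl
        omega
      have hvR1 : (∑ j ∈ Finset.univ.filter fun t : Fin n => (t : ℕ) = blockMax (J (k+1)) + 1,
          uvec J W ε k j) ≤ 1 := by
        have h1 := Finset.sum_le_card_nsmul
          (Finset.univ.filter fun t : Fin n => (t : ℕ) = blockMax (J (k+1)) + 1)
          (uvec J W ε k) 1 (fun j hj => le_of_eq (hfRu j hj))
        rw [nsmul_eq_mul, mul_one] at h1
        have h2 : (((Finset.univ.filter fun t : Fin n =>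
            (t : ℕ) = blockMax (J (k+1)) + 1)).card : ℝ) ≤ 1 := by
          exact_mod_cast hfRcard (k+1)
        linarith
      have hvR0 : 0 ≤ ∑ j ∈ Finset.univ.filter fun t : Fin n =>
          (t : ℕ) = blockMax (J (k+1)) + 1, uvec J W ε k j :=
        Finset.sum_nonneg fun j _ => ih2 j
      -- ΣfL : left boundary value ≤ lam + c ε
      have hfLu : ∀ j ∈ (Finset.univ.filter fun t : Fin n => (t : ℕ) + 1 = blockMin (J (k+1))),
          uvec J W ε k j ≤ lam + c * ε := by
        intro j hj
        have hjv : (j : ℕ) + 1 = blockMin (J (k+1)) := (Finset.mem_filter.mp hj).2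
        have hk2 : 2 ≤ k + 1 := by
          by_contra h
          have h1 : k + 1 = 1 := by omega
          rw [h1, ha1] at hjv
          omega
        have hg := hglue (k+1) hk2 hkm
        rw [Nat.add_sub_cancel] at hg
        have hjk : j ∈ J k := by
          rw [hmem k (by omega) (by omega)]
          have := hmonoa k (k+1) (by omega) (by omega) hkm
          omega
        have honly : ∀ l', 1 ≤ l' → l' ≤ m → l' ≠ k → j ∉ J l' := by
          intro l' h1 h2 hlk hjl
          have hjl' := (hmem l' h1 h2 j).1 hjl
          by_cases hord : l' < k
          · have := hB2 l' (k+1) h1 (by omega) hkm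
            omega
          · have hge : k + 1 ≤ l' := by omega
            have hmin : blockMin (J (k+1)) ≤ blockMin (J l') := by
              rcases eq_or_lt_of_le hge with h' | h'
              · rw [← h']
              · exact le_of_lt (hmonoa (k+1) l' (by omega) h' h2)
            omega
        exact ih4 k (by omega) le_rfl j hjk honly
      have hvL1 : (∑ j ∈ Finset.univ.filter fun t : Fin n => (t : ℕ) + 1 = blockMin (J (k+1)),
          uvec J W ε k j) ≤ lam + c * ε := by
        have h1 := Finset.sum_le_card_nsmul
          (Finset.univ.filter fun t : Fin n => (t : ℕ) + 1 = blockMin (J (k+1)))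
          (uvec J W ε k) (lam + c * ε) hfLu
        rw [nsmul_eq_mul] at h1
        have h2 : (((Finset.univ.filter fun t : Fin n =>
            (t : ℕ) + 1 = blockMin (J (k+1)))).card : ℝ) ≤ 1 := by
          exact_mod_cast hfLcard (k+1)
        have h3 := mul_le_mul_of_nonneg_right h2 hlce
        rw [one_mul] at h3
        linarith
      have hvL0 : 0 ≤ ∑ j ∈ Finset.univ.filter fun t : Fin n =>
          (t : ℕ) + 1 = blockMin (J (k+1)), uvec J W ε k j :=
        Finset.sum_nonneg fun j _ => ih2 j
      -- the block sum
      have hJsum : ∑ j ∈ J (k+1), uvec J W ε k j ≤ (L : ℝ) * Mh + (L1 : ℝ) * (c * ε) := by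
        have hce : 0 ≤ c * ε := mul_nonneg hc0 hε0
        have hL10 : (0:ℝ) ≤ (L1 : ℝ) := Nat.cast_nonneg _
        rcases Nat.eq_zero_or_pos k with hk0 | hk1'
        · subst hk0
          have h1 := Finset.sum_le_card_nsmul (J 1) (uvec J W ε 0) 1
            (fun j _ => le_of_eq rfl)
          rw [nsmul_eq_mul, mul_one] at h1
          have h2 : ((J 1).card : ℝ) ≤ (L : ℝ) := by exact_mod_cast hcardL 1 le_rfl hkm
          have h3 : (L : ℝ) * 1 ≤ (L : ℝ) * Mh := mul_le_mul_of_nonneg_left hMh1 (Nat.cast_nonneg _)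
          have h4 : (0:ℝ) ≤ (L1 : ℝ) * (c * ε) := mul_nonneg hL10 hce
          linarith only [h1, h2, h3, h4]
        · have hk2 : 2 ≤ k + 1 := by omega
          rw [← Finset.sum_inter_add_sum_sdiff (J (k+1)) (J k) (uvec J W ε k)]
          have hint : ∀ j ∈ J (k+1) ∩ J k, uvec J W ε k j ≤ Mh + c * ε := by
            intro j hj
            rw [Finset.mem_inter] at hj
            apply ih3 j hj.2
            by_cases hk1 : k = 1
            · exact Or.inl hk1
            · right
              intro hjk1
              have := hB2 (k-1) (k+1) (by omega) (by omega) hkm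
              have h1 := (hmem (k-1) (by omega) (by omega) j).1 hjk1
              have h2 := (hmem (k+1) (by omega) hkm j).1 hj.1
              omega
          have hdiff : ∀ j ∈ J (k+1) \ J k, uvec J W ε k j = 1 := by
            intro j hj
            rw [Finset.mem_sdiff] at hj
            apply ih1
            intro l h1 h2 hjl
            by_cases hlk : l = k
            · exact hj.2 (hlk ▸ hjl)
            · have := hB2 l (k+1) h1 (by omega) hkm
              have h3 := (hmem l h1 (by omega) j).1 hjl
              have h4 := (hmem (k+1) (by omega) hkm j).1 hj.1
              omega
          have hs1 := Finset.sum_le_card_nsmul (J (k+1) ∩ J k) (uvec J W ε k) (Mh + c * ε) hint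
          rw [nsmul_eq_mul] at hs1
          have hs2 := Finset.sum_le_card_nsmul (J (k+1) \ J k) (uvec J W ε k) 1
            (fun j hj => le_of_eq (hdiff j hj))
          rw [nsmul_eq_mul, mul_one] at hs2
          have hcint : ((J (k+1) ∩ J k).card : ℝ) ≤ (L1 : ℝ) := by
            have h := hcardL1 (k+1) hk2 hkm
            rw [Nat.add_sub_cancel, Finset.inter_comm] at h
            exact_mod_cast h
          have hcards : ((J (k+1) ∩ J k).card : ℝ) + ((J (k+1) \ J k).card : ℝ) ≤ (L : ℝ) := by
            have h := Finset.card_inter_add_card_sdiff (J (k+1)) (J k)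
            have h2 := hcardL (k+1) (by omega) hkm
            exact_mod_cast (by omega : (J (k+1) ∩ J k).card + (J (k+1) \ J k).card ≤ L)
          have hp0 : (0:ℝ) ≤ ((J (k+1) ∩ J k).card : ℝ) := Nat.cast_nonneg _
          have hq0 : (0:ℝ) ≤ ((J (k+1) \ J k).card : ℝ) := Nat.cast_nonneg _
          have hmul1 : ((J (k+1) ∩ J k).card : ℝ) * (c * ε) ≤ (L1 : ℝ) * (c * ε) :=
            mul_le_mul_of_nonneg_right hcint hce
          have hmul2 : (((J (k+1) ∩ J k).card : ℝ) + ((J (k+1) \ J k).card : ℝ)) * Mh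
              ≤ (L : ℝ) * Mh := mul_le_mul_of_nonneg_right hcards (le_trans zero_le_one hMh1)
          have hmul3 : ((J (k+1) \ J k).card : ℝ) * 1 ≤ ((J (k+1) \ J k).card : ℝ) * Mh :=
            mul_le_mul_of_nonneg_left hMh1 hq0
          have hex1 : ((J (k+1) ∩ J k).card : ℝ) * (Mh + c * ε) =
              ((J (k+1) ∩ J k).card : ℝ) * Mh + ((J (k+1) ∩ J k).card : ℝ) * (c * ε) := by ring
          have hex2 : (((J (k+1) ∩ J k).card : ℝ) + ((J (k+1) \ J k).card : ℝ)) * Mh =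
              ((J (k+1) ∩ J k).card : ℝ) * Mh + ((J (k+1) \ J k).card : ℝ) * Mh := by ring
          linarith only [hs1, hs2, hmul1, hmul2, hmul3, hex1, hex2]
      -- total sum over J ∪ ∂J
      have hStot : ∑ j ∈ J (k+1) ∪ bdry (J (k+1)), uvec J W ε k j ≤ c * (1 - Wtil) := by
        have hsplit : ∑ j ∈ J (k+1) ∪ bdry (J (k+1)), uvec J W ε k j =
            ∑ j ∈ J (k+1), uvec J W ε k j + ∑ j ∈ bdry (J (k+1)), uvec J W ε k j :=
          Finset.sum_union (hdisjJbd (k+1))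
        have hbsplit : ∑ j ∈ bdry (J (k+1)), uvec J W ε k j =
            (∑ j ∈ Finset.univ.filter fun t : Fin n => (t : ℕ) + 1 = blockMin (J (k+1)),
              uvec J W ε k j) +
            (∑ j ∈ Finset.univ.filter fun t : Fin n => (t : ℕ) = blockMax (J (k+1)) + 1,
              uvec J W ε k j) := by
          rw [hbdry_union (k+1) hK1 hkm, Finset.sum_union (hdisjLR (k+1) hK1 hkm)]
        have hrweq : c * (1 - Wtil) =
            c * (1 - ((L1:ℝ)+1) * ε - Wtil) + ((L1:ℝ)+1) * (c * ε) := by ring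
        rw [hsplit, hbsplit, hrweq, hcD]
        linarith only [hJsum, hvL1, hvR1]
      have hSc : ∑ j ∈ J (k+1) ∪ bdry (J (k+1)), uvec J W ε k j ≤ c := by
        have h1 : c * Wtil ≥ 0 := mul_nonneg hc0 hWtil0
        have h2 : c * (1 - Wtil) = c - c * Wtil := by ring
        linarith only [hStot, h1, h2]
      have hS0 : 0 ≤ ∑ j ∈ J (k+1) ∪ bdry (J (k+1)), uvec J W ε k j :=
        Finset.sum_nonneg fun j _ => ih2 j
      have hval : ∀ i ∈ J (k+1), uvec J W ε (k+1) i =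
          eL m J W (k+1) i * (∑ j ∈ Finset.univ.filter fun t : Fin n =>
            (t : ℕ) + 1 = blockMin (J (k+1)), uvec J W ε k j) +
          eR m J W (k+1) i * (∑ j ∈ Finset.univ.filter fun t : Fin n =>
            (t : ℕ) = blockMax (J (k+1)) + 1, uvec J W ε k j) +
          ε * ∑ j ∈ J (k+1) ∪ bdry (J (k+1)), uvec J W ε k j := by
        intro i hi
        rw [huS k i]
        exact hrowHat (k+1) hK1 hkm i hi (uvec J W ε k)
      -- bullet (3) : uniform bound for fresh rows
      have bullet3 : ∀ i ∈ J (k+1), (k + 1 = 1 ∨ i ∉ J (k + 1 - 1)) →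
          uvec J W ε (k+1) i ≤ Mh + c * ε := by
        intro i hi hcase
        have heL := heL01 (k+1) hK1 hkm i
        have heR := heR01 (k+1) hK1 hkm i
        have heLW : eL m J W (k+1) i ≤ Wtil := by
          by_cases hk1 : k + 1 = 1
          · rw [eL, if_pos hk1]; exact hWtil0
          · have hik : i ∉ J (k + 1 - 1) := by
              rcases hcase with h | h
              · exact absurd h hk1
              · exact h
            exact hWtil_ge (k+1) (by omega) hkm i hi hik
        have h1 : eL m J W (k+1) i * (∑ j ∈ Finset.univ.filter fun t : Fin n =>
              (t : ℕ) + 1 = blockMin (J (k+1)), uvec J W ε k j) ≤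
            eL m J W (k+1) i * (lam + c * ε) := mul_le_mul_of_nonneg_left hvL1 heL.1
        have h2 : eR m J W (k+1) i * (∑ j ∈ Finset.univ.filter fun t : Fin n =>
              (t : ℕ) = blockMax (J (k+1)) + 1, uvec J W ε k j) ≤
            eR m J W (k+1) i * 1 := mul_le_mul_of_nonneg_left hvR1 heR.1
        have h3 : ε * ∑ j ∈ J (k+1) ∪ bdry (J (k+1)), uvec J W ε k j ≤
            ε * (c * (1 - Wtil)) := mul_le_mul_of_nonneg_left hStot hε0
        have h4 : eL m J W (k+1) i * lam + eR m J W (k+1) i ≤ Mh := by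
          have ha' : eL m J W (k+1) i * lam ≤ eL m J W (k+1) i * max lam 1 :=
            mul_le_mul_of_nonneg_left (le_max_left _ _) heL.1
          have hb' : eR m J W (k+1) i * 1 ≤ eR m J W (k+1) i * max lam 1 :=
            mul_le_mul_of_nonneg_left (le_max_right _ _) heR.1
          have hcc : (eL m J W (k+1) i + eR m J W (k+1) i) * max lam 1 ≤ Wbar * max lam 1 :=
            mul_le_mul_of_nonneg_right (hsumLR (k+1) hK1 hkm i hi)
              (le_trans zero_le_one (le_max_right _ _))
          have hd : Wbar * max lam 1 ≤ Mh := le_max_left _ _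
          have hexp : (eL m J W (k+1) i + eR m J W (k+1) i) * max lam 1 =
              eL m J W (k+1) i * max lam 1 + eR m J W (k+1) i * max lam 1 := by ring
          linarith only [ha', hb', hcc, hd, hexp]
        have h5 : eL m J W (k+1) i * (c * ε) ≤ Wtil * (c * ε) :=
          mul_le_mul_of_nonneg_right heLW (mul_nonneg hc0 hε0)
        have hexp1 : eL m J W (k+1) i * (lam + c * ε) =
            eL m J W (k+1) i * lam + eL m J W (k+1) i * (c * ε) := by ring
        have hexp2 : ε * (c * (1 - Wtil)) = c * ε - Wtil * (c * ε) := by ring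
        rw [hval i hi]
        linarith only [h1, h2, h3, h4, h5, hexp1, hexp2]
      refine ⟨?_, ?_, bullet3, ?_, ?_⟩
      · -- (1)
        intro i hi
        have hiK : i ∉ J (k+1) := hi (k+1) (by omega) le_rfl
        have heq : uvec J W ε (k+1) i = uvec J W ε k i := by
          rw [huS k i]
          exact hrowId (k+1) hK1 hkm i hiK (uvec J W ε k)
        rw [heq]
        exact ih1 i fun l h1 h2 => hi l h1 (by omega)
      · -- (2)
        intro i
        rw [huS k i]
        apply Finset.sum_nonneg
        intro j _
        apply mul_nonneg _ (ih2 j)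
        show 0 ≤ W (k+1) i j + if i ∈ J (k+1) ∧ j ∈ J (k+1) ∪ bdry (J (k+1)) then ε else 0
        have hW := (hW01 (k+1) hK1 hkm i j).1
        have h2 : (0:ℝ) ≤ if i ∈ J (k+1) ∧ j ∈ J (k+1) ∪ bdry (J (k+1)) then ε else 0 := by
          split
          · exact hε0
          · exact le_rfl
        linarith
      · -- (4)
        intro l h1 h2 i hiJ honly
        by_cases hlK : l = k + 1
        · rw [hlK] at hiJ honly
          have heL := heL01 (k+1) hK1 hkm i
          have heR := heR01 (k+1) hK1 hkm i
          have hiJm' : i ∉ Jminus m J (k+1) := (hJm (k+1) i).2 honly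
          have hx := hlam_ge (k+1) hK1 hkm i hiJm'
          have heLW : eL m J W (k+1) i ≤ Wtil := by
            by_cases hk1 : k + 1 = 1
            · rw [eL, if_pos hk1]; exact hWtil0
            · have hik : i ∉ J (k + 1 - 1) := honly (k + 1 - 1) (by omega) (by omega) (by omega)
              exact hWtil_ge (k+1) (by omega) hkm i hiJ hik
          have heL1 : 0 < 1 - eL m J W (k+1) i := by linarith only [heLW, hWtil1]
          rw [div_le_iff₀ heL1] at hx
          have hb1 : eL m J W (k+1) i * (∑ j ∈ Finset.univ.filter fun t : Fin n =>
                (t : ℕ) + 1 = blockMin (J (k+1)), uvec J W ε k j) ≤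
              eL m J W (k+1) i * (lam + c * ε) := mul_le_mul_of_nonneg_left hvL1 heL.1
          have hb2 : eR m J W (k+1) i * (∑ j ∈ Finset.univ.filter fun t : Fin n =>
                (t : ℕ) = blockMax (J (k+1)) + 1, uvec J W ε k j) ≤
              eR m J W (k+1) i * 1 := mul_le_mul_of_nonneg_left hvR1 heR.1
          have hb3 : ε * ∑ j ∈ J (k+1) ∪ bdry (J (k+1)), uvec J W ε k j ≤
              ε * (c * (1 - Wtil)) := mul_le_mul_of_nonneg_left hStot hε0
          have hb5 : eL m J W (k+1) i * (c * ε) ≤ Wtil * (c * ε) :=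
            mul_le_mul_of_nonneg_right heLW (mul_nonneg hc0 hε0)
          have hexp1 : eL m J W (k+1) i * (lam + c * ε) =
              eL m J W (k+1) i * lam + eL m J W (k+1) i * (c * ε) := by ring
          have hexp2 : ε * (c * (1 - Wtil)) = c * ε - Wtil * (c * ε) := by ring
          have hexp3 : lam * (1 - eL m J W (k+1) i) = lam - eL m J W (k+1) i * lam := by ring
          rw [hval i hiJ]
          linarith only [hb1, hb2, hb3, hb5, hx, hexp1, hexp2, hexp3]
        · have hiK : i ∉ J (k+1) := honly (k+1) (by omega) hkm (fun h => hlK h.symm)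
          have heq : uvec J W ε (k+1) i = uvec J W ε k i := by
            rw [huS k i]
            exact hrowId (k+1) hK1 hkm i hiK (uvec J W ε k)
          rw [heq]
          exact ih4 l h1 (by omega) i hiJ honly
      · -- (5)
        intro l h2 hl i hi1 hi2
        by_cases hlK : l = k + 1
        · rw [hlK] at hi1 hi2
          have heL := heL01 (k+1) hK1 hkm i
          have heR := heR01 (k+1) hK1 hkm i
          have hx := hlam'_ge (k+1) (by omega) hkm i hi1 hi2
          have hb1 : eL m J W (k+1) i * (∑ j ∈ Finset.univ.filter fun t : Fin n =>
                (t : ℕ) + 1 = blockMin (J (k+1)), uvec J W ε k j) ≤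
              eL m J W (k+1) i * (lam + c * ε) := mul_le_mul_of_nonneg_left hvL1 heL.1
          have hb2 : eR m J W (k+1) i * (∑ j ∈ Finset.univ.filter fun t : Fin n =>
                (t : ℕ) = blockMax (J (k+1)) + 1, uvec J W ε k j) ≤
              eR m J W (k+1) i * 1 := mul_le_mul_of_nonneg_left hvR1 heR.1
          have hb3 : ε * ∑ j ∈ J (k+1) ∪ bdry (J (k+1)), uvec J W ε k j ≤ ε * c :=
            mul_le_mul_of_nonneg_left hSc hε0
          have hb5 : eL m J W (k+1) i * (c * ε) ≤ 1 * (c * ε) :=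
            mul_le_mul_of_nonneg_right heL.2 (mul_nonneg hc0 hε0)
          have hexp1 : eL m J W (k+1) i * (lam + c * ε) =
              lam * eL m J W (k+1) i + eL m J W (k+1) i * (c * ε) := by ring
          have hexp2 : ε * c = c * ε := by ring
          rw [hval i hi2]
          linarith only [hb1, hb2, hb3, hb5, hx, hexp1, hexp2]
        · have hiK : i ∉ J (k+1) := by
            intro hiK
            by_cases hk : k = l
            · have hsep' := hB2 (l-1) (k+1) (by omega) (by omega) hkm
              have hm1 := (hmem (l-1) (by omega) (by omega) i).1 hi1
              have hm2 := (hmem (k+1) (by omega) hkm i).1 hiK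
              omega
            · have hsep' := hB2 l (k+1) (by omega) (by omega) hkm
              have hm1 := (hmem l (by omega) (by omega) i).1 hi2
              have hm2 := (hmem (k+1) (by omega) hkm i).1 hiK
              omega
          have heq : uvec J W ε (k+1) i = uvec J W ε k i := by
            rw [huS k i]
            exact hrowId (k+1) hK1 hkm i hiK (uvec J W ε k)
          rw [heq]
          exact ih5 l h2 (by omega) i hi1 hi2
  -- conclude
  constructor
  · intro k hk i hiJm'
    rw [Finset.mem_Icc] at hk
    rw [sum_prod_eq_uvec J W ε m i]
    obtain ⟨l, hl, hil⟩ := hcover i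
    rw [Finset.mem_Icc] at hl
    have honly := (hJm k i).1 hiJm'
    have hlk : l = k := by
      by_contra h
      exact honly l hl.1 hl.2 h hil
    exact (main m le_rfl).2.2.2.1 k hk.1 hk.2 i (hlk ▸ hil) honly
  · intro k hk i hi
    rw [Finset.mem_Icc] at hk
    rw [Finset.mem_inter] at hi
    rw [sum_prod_eq_uvec J W ε m i]
    exact (main m le_rfl).2.2.2.2 k hk.1 hk.2 i hi.1 hi.2
end

section
/- Assume (S1)–(S2) with potentials g_1,…,g_{h−1} (any h−1 potentials satisfying (S2)). For x, x' ∈ X define num(x, x') = ∫ [Π_{j=1}^{h−1} g_j(z_j)] · m(x, z_1) · [Π_{j=2}^{h−1} m(z_{j−1}, z_j)] · m(z_{h−1}, x') ν_0^{⊗(h−1)}(dz_1⋯dz_{h−1}) (for h = 1 read num(x,x') = m(x,x')), and den(x) = ∫ num(x, x') ν_0(dx'). Then den(x) > 0 for every x ∈ X, and for all x, x' ∈ X: δ^{(1−h)/h}·σ− ≤ num(x, x')/den(x) ≤ σ+. In other words, the h-step conditional transition density of the hidden chain given the intermediate observations is bounded below by δ^{(1−h)/h}·σ− and above by σ+. 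-/
open MeasureTheory Finset

/-- Extension of `z : X^{h-1}` (interpreted as states at times `1, …, h-1`) by the boundary
states `x1` at time `0` and `xh1` at times `≥ h`. -/
noncomputable def ext1 {X : Type*} (x1 xh1 : X) {N : ℕ} (z : Fin N → X) (t : ℕ) : X :=
  if ht : 1 ≤ t ∧ t ≤ N then z ⟨t - 1, by omega⟩ else if t = 0 then x1 else xh1

/-- The `h`-step minorisation of assumption (S1):
`∫ ∏_{j=1}^{h} m(x_j, x_{j+1}) ν₀(dx_2) ⋯ ν₀(dx_h) ≥ σ₋` for all `x_1, x_{h+1}`. -/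
def S1minor {X : Type*} [MeasurableSpace X] (ν0 : Measure X) (mker : X → X → ℝ)
    (h : ℕ) (σm : ℝ) : Prop :=
  ∀ x1 xh1 : X, σm ≤
    ∫ z : Fin (h - 1) → X,
      ∏ j ∈ Finset.range h, mker (ext1 x1 xh1 z j) (ext1 x1 xh1 z (j + 1))
      ∂(Measure.pi fun _ => ν0)

/-- Extension of `z : X^{u-s+1}` (interpreted as states at times `s, …, u`) by the boundary
states `xm` at times `< s` and `xp` at times `> u`. -/
noncomputable def extBlock {X : Type*} (s u : ℕ) (xm xp : X) (z : Fin (u - s + 1) → X)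
    (t : ℕ) : X :=
  if ht : s ≤ t ∧ t ≤ u then z ⟨t - s, by omega⟩ else if t < s then xm else xp

/-- `num(x, x')`: the unnormalized `h`-step transition density from `x` to `x'` given the
intermediate observations, `∫ [Π_{j=1}^{h-1} g_j(z_j)] m(x,z_1) [Π_{j=2}^{h-1} m(z_{j-1},z_j)]
m(z_{h-1}, x') ν₀^{⊗(h-1)}(dz)` (read as `m(x,x')` for `h = 1`). -/
noncomputable def hStepNum {X : Type*} [MeasurableSpace X] (ν0 : Measure X)
    (mker : X → X → ℝ) (g : ℕ → X → ℝ) (h : ℕ) (x x' : X) : ℝ :=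
  ∫ z : Fin (h - 1) → X,
    (∏ j ∈ Finset.range h, mker (ext1 x x' z j) (ext1 x x' z (j + 1))) *
      ∏ j ∈ Finset.Icc 1 (h - 1), g j (ext1 x x' z j)
    ∂(Measure.pi fun _ => ν0)

/-- `den(x) = ∫ num(x, x') ν₀(dx')`. -/
noncomputable def hStepDen {X : Type*} [MeasurableSpace X] (ν0 : Measure X)
    (mker : X → X → ℝ) (g : ℕ → X → ℝ) (h : ℕ) (x : X) : ℝ :=
  ∫ x', hStepNum ν0 mker g h x x' ∂ν0

/-!
Write `h = n + 1`. Both `num(x, x')` and `den(x)` integrate the observation weight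
`G(z) = ∏ⱼ g_j(z_j)` against the density `K(z)` of the first `n` steps of the chain from `x`:
`num` carries the extra factor `m(z_n, x')`, which integrates out to `1` in `den`. The upper
bound is then just `m ≤ σ₊`. For the lower bound, (S2) gives `G(z) ≤ δ^{n/h} G(w)` for all
`z, w`; comparing `G` at two independent points gives `∫ f · ∫ K G ≤ δ^{n/h} ∫ K · ∫ f G` for
`f(z) = K(z) m(z_n, x')`, and `∫ f ≥ σ₋` by (S1) while `∫ K = 1`.
-/

section

variable {X : Type*}

lemma ext1_of_mem (x x' : X) {N : ℕ} (z : Fin N → X) {t : ℕ} (h1 : 1 ≤ t) (h2 : t ≤ N) :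
    ext1 x x' z t = z ⟨t - 1, by omega⟩ :=
  dif_pos ⟨h1, h2⟩

lemma ext1_of_lt (x x' : X) {N : ℕ} (z : Fin N → X) {t : ℕ} (ht : N < t) :
    ext1 x x' z t = x' := by
  rw [ext1, dif_neg (by omega), if_neg (by omega)]

lemma ext1_congr_right (x x' y' : X) {N : ℕ} (z : Fin N → X) {t : ℕ} (ht : t ≤ N) :
    ext1 x x' z t = ext1 x y' z t := by
  unfold ext1
  split_ifs <;> first | rfl | omega

lemma ext1_snoc (x x' : X) {n : ℕ} (w : Fin n → X) (y : X) {t : ℕ} (ht : t ≤ n + 1) :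
    ext1 x x' (Fin.snoc w y) t = ext1 x y w t := by
  rcases Nat.eq_zero_or_pos t with rfl | h1
  · simp [ext1]
  rcases ht.lt_or_eq with ht | rfl
  · rw [ext1_of_mem _ _ _ h1 ht.le, ext1_of_mem _ _ _ h1 (by omega)]
    exact Fin.snoc_castSucc (α := fun _ => X) y w ⟨t - 1, by omega⟩
  · rw [ext1_of_mem _ _ _ h1 le_rfl, ext1_of_lt _ _ _ (by omega)]
    exact Fin.snoc_last (α := fun _ => X) y w

lemma measurable_ext1 [MeasurableSpace X] (x x' : X) {N : ℕ} (t : ℕ) :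
    Measurable fun z : Fin N → X => ext1 x x' z t := by
  unfold ext1
  split_ifs
  · exact measurable_pi_apply _
  all_goals exact measurable_const

-- `K(z)`: the density of `(z₁, …, zₙ)` under the chain started at `x`.
noncomputable def walkDensity (m : X → X → ℝ) (x : X) {n : ℕ} (z : Fin n → X) : ℝ :=
  ∏ j ∈ range n, m (ext1 x x z j) (ext1 x x z (j + 1))

lemma prod_range_succ_ext1 (m : X → X → ℝ) (x x' : X) {n : ℕ} (z : Fin n → X) :
    ∏ j ∈ range (n + 1), m (ext1 x x' z j) (ext1 x x' z (j + 1))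
      = walkDensity m x z * m (ext1 x x z n) x' := by
  rw [prod_range_succ, ext1_congr_right x x' x z le_rfl, ext1_of_lt x x' z (by omega)]
  congr 1
  refine prod_congr rfl fun j hj => ?_
  have hj : j < n := mem_range.mp hj
  rw [ext1_congr_right x x' x z hj.le, ext1_congr_right x x' x z hj]

lemma walkDensity_snoc (m : X → X → ℝ) (x : X) {n : ℕ} (w : Fin n → X) (y : X) :
    walkDensity m x (Fin.snoc w y) = walkDensity m x w * m (ext1 x x w n) y := by
  rw [walkDensity, ← prod_range_succ_ext1]
  refine prod_congr rfl fun j hj => ?_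
  have hj : j < n + 1 := mem_range.mp hj
  rw [ext1_snoc x x w y hj.le, ext1_snoc x x w y hj]

lemma walkDensity_nonneg {m : X → X → ℝ} (hm : ∀ x y, 0 ≤ m x y) (x : X) {n : ℕ}
    (z : Fin n → X) : 0 ≤ walkDensity m x z :=
  prod_nonneg fun _ _ => hm _ _

lemma measurable_walkDensity [MeasurableSpace X] {m : X → X → ℝ}
    (hm : Measurable (Function.uncurry m)) (x : X) {n : ℕ} :
    Measurable (walkDensity m x : (Fin n → X) → ℝ) :=
  Finset.measurable_prod _ fun j _ =>
    hm.comp ((measurable_ext1 x x j).prodMk (measurable_ext1 x x (j + 1)))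

structure IsBoundedMarkovDensity [MeasurableSpace X] (ν : Measure X) (m : X → X → ℝ) (σ : ℝ) :
    Prop where
  measurable : Measurable (Function.uncurry m)
  nonneg : ∀ x y, 0 ≤ m x y
  le : ∀ x y, m x y ≤ σ
  integral_eq_one : ∀ x, ∫ y, m x y ∂ν = 1

namespace IsBoundedMarkovDensity

variable [MeasurableSpace X] {ν : Measure X} {m : X → X → ℝ} {σ : ℝ}

lemma norm_le (hm : IsBoundedMarkovDensity ν m σ) (x y : X) : ‖m x y‖ ≤ σ := by
  rw [Real.norm_of_nonneg (hm.nonneg x y)]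
  exact hm.le x y

lemma integrable_walkDensity (hm : IsBoundedMarkovDensity ν m σ) {n : ℕ} {μ : Measure (Fin n → X)}
    [IsFiniteMeasure μ] (x : X) : Integrable (walkDensity m x) μ := by
  refine .of_bound (measurable_walkDensity hm.measurable x).aestronglyMeasurable (σ ^ n)
    (ae_of_all _ fun z => ?_)
  calc ‖walkDensity m x z‖ = ∏ j ∈ range n, ‖m (ext1 x x z j) (ext1 x x z (j + 1))‖ :=
        norm_prod _ _
    _ ≤ ∏ _j ∈ range n, σ := prod_le_prod (fun _ _ => norm_nonneg _) fun _ _ => hm.norm_le _ _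
    _ = σ ^ n := by rw [prod_const, card_range]

lemma integrable_walkDensity_mul (hm : IsBoundedMarkovDensity ν m σ) {n : ℕ}
    {μ : Measure (Fin n → X)} [IsFiniteMeasure μ] (x x' : X) :
    Integrable (fun z => walkDensity m x z * m (ext1 x x z n) x') μ :=
  (hm.integrable_walkDensity x).mul_bdd
    (hm.measurable.comp ((measurable_ext1 x x n).prodMk measurable_const)).aestronglyMeasurable
    (ae_of_all _ fun _ => hm.norm_le _ _)

variable [IsFiniteMeasure ν] {α : Type*} [MeasurableSpace α] {μ : Measure α} [SFinite μ]
  {F : α → ℝ} {φ : α → X}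

lemma integrable_mul_prod (hm : IsBoundedMarkovDensity ν m σ) (hF : Integrable F μ)
    (hφ : Measurable φ) : Integrable (fun p : X × α => F p.2 * m (φ p.2) p.1) (ν.prod μ) :=
  (hF.comp_snd ν).mul_bdd
    (hm.measurable.comp ((hφ.comp measurable_snd).prodMk measurable_fst)).aestronglyMeasurable
    (ae_of_all _ fun _ => hm.norm_le _ _)

lemma integral_mul_prod (hm : IsBoundedMarkovDensity ν m σ) (hF : Integrable F μ)
    (hφ : Measurable φ) : ∫ p : X × α, F p.2 * m (φ p.2) p.1 ∂(ν.prod μ) = ∫ a, F a ∂μ := by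
  rw [integral_prod_symm _ (hm.integrable_mul_prod hF hφ)]
  refine integral_congr_ae (ae_of_all _ fun a => ?_)
  simp only [integral_const_mul, hm.integral_eq_one, mul_one]

lemma integral_walkDensity (hm : IsBoundedMarkovDensity ν m σ) (x : X) :
    ∀ n : ℕ, ∫ z : Fin n → X, walkDensity m x z ∂(Measure.pi fun _ => ν) = 1
  | 0 => by simp [walkDensity, measureReal_def]
  | n + 1 => by
    rw [← (measurePreserving_piFinSuccAbove (fun _ => ν) (Fin.last n)).symm.integral_comp']
    simp only [MeasurableEquiv.piFinSuccAbove_symm_apply, Fin.insertNthEquiv, Equiv.coe_fn_mk,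
      Fin.insertNth_last', walkDensity_snoc]
    rw [hm.integral_mul_prod (hm.integrable_walkDensity x) (measurable_ext1 x x n),
      hm.integral_walkDensity x n]

end IsBoundedMarkovDensity

noncomputable def obsWeight (g : ℕ → X → ℝ) {n : ℕ} (z : Fin n → X) : ℝ :=
  ∏ j : Fin n, g (j + 1) (z j)

lemma prod_Icc_ext1 (g : ℕ → X → ℝ) (x x' : X) {n : ℕ} (z : Fin n → X) :
    ∏ j ∈ Icc 1 n, g j (ext1 x x' z j) = obsWeight g z := by
  symm
  refine prod_bij (fun j _ => j + 1) (fun j _ => by simp) (fun i _ j _ h => by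
    simpa [Fin.ext_iff] using h) (fun t ht => ?_) (fun j _ => ?_)
  · obtain ⟨h1, h2⟩ := mem_Icc.mp ht
    exact ⟨⟨t - 1, by omega⟩, mem_univ _, by simp; omega⟩
  · rw [ext1_of_mem x x' z (by omega) (by omega)]
    simp

structure IsComparablePotential [MeasurableSpace X] (g : ℕ → X → ℝ) (D : ℝ) : Prop where
  measurable : ∀ t, Measurable (g t)
  pos : ∀ t x, 0 < g t x
  le_mul : ∀ t x y, g t x ≤ D * g t y

lemma obsWeight_pos {g : ℕ → X → ℝ} (hg : ∀ t x, 0 < g t x) {n : ℕ} (z : Fin n → X) :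
    0 < obsWeight g z :=
  prod_pos fun _ _ => hg _ _

lemma measurable_obsWeight [MeasurableSpace X] {g : ℕ → X → ℝ} (hg : ∀ t, Measurable (g t))
    {n : ℕ} : Measurable (obsWeight g : (Fin n → X) → ℝ) :=
  Finset.measurable_prod _ fun j _ => (hg _).comp (measurable_pi_apply j)

lemma obsWeight_le_mul {g : ℕ → X → ℝ} {D : ℝ} (hg : ∀ t x, 0 < g t x)
    (hD : ∀ t x y, g t x ≤ D * g t y) {n : ℕ} (z w : Fin n → X) :
    obsWeight g z ≤ D ^ n * obsWeight g w :=
  calc obsWeight g z ≤ ∏ j : Fin n, D * g (j + 1) (w j) :=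
        prod_le_prod (fun _ _ => (hg _ _).le) fun _ _ => hD _ _ _
    _ = D ^ n * obsWeight g w := by rw [prod_mul_distrib, prod_const, card_univ, Fintype.card_fin,
        obsWeight]

lemma IsComparablePotential.integrable_mul_obsWeight [MeasurableSpace X] [Nonempty X]
    {g : ℕ → X → ℝ} {D : ℝ} (hg : IsComparablePotential g D) {n : ℕ} {μ : Measure (Fin n → X)}
    {F : (Fin n → X) → ℝ} (hF : Integrable F μ) : Integrable (fun z => F z * obsWeight g z) μ :=
  hF.mul_bdd (measurable_obsWeight hg.measurable).aestronglyMeasurable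
    (ae_of_all _ fun z => (Real.norm_of_nonneg (obsWeight_pos hg.pos z).le).trans_le
      (obsWeight_le_mul hg.pos hg.le_mul z fun _ => Classical.arbitrary X))

section

variable {α : Type*} [MeasurableSpace α] {μ : Measure α} {f K G : α → ℝ}

lemma integral_mul_pos_of_pos (hK : 0 ≤ K) (hKpos : 0 < ∫ a, K a ∂μ)
    (hKG : Integrable (fun a => K a * G a) μ) (hG : ∀ a, 0 < G a) :
    0 < ∫ a, K a * G a ∂μ := by
  rw [integral_pos_iff_support_of_nonneg hK (.of_integral_ne_zero hKpos.ne')] at hKpos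
  rw [integral_pos_iff_support_of_nonneg (fun a => mul_nonneg (hK a) (hG a).le) hKG]
  convert hKpos using 2
  ext a
  simp [(hG a).ne']

lemma integral_mul_integral_mul_le {A : ℝ} (hf : 0 ≤ f) (hK : 0 ≤ K) (hfi : Integrable f μ)
    (hKi : Integrable K μ) (hfG : Integrable (fun a => f a * G a) μ)
    (hKG : Integrable (fun a => K a * G a) μ) (hG : ∀ a b, G a ≤ A * G b) :
    (∫ a, f a ∂μ) * ∫ a, K a * G a ∂μ ≤ A * ((∫ a, K a ∂μ) * ∫ a, f a * G a ∂μ) := by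
  have hpt : ∀ b, G b * ∫ a, f a ∂μ ≤ A * ∫ a, f a * G a ∂μ := fun b =>
    calc G b * ∫ a, f a ∂μ = ∫ a, f a * G b ∂μ := by rw [integral_mul_const, mul_comm]
      _ ≤ ∫ a, A * (f a * G a) ∂μ := integral_mono (hfi.mul_const _) (hfG.const_mul A)
          fun a => (mul_le_mul_of_nonneg_left (hG b a) (hf a)).trans_eq (by ring)
      _ = A * ∫ a, f a * G a ∂μ := integral_const_mul _ _
  calc (∫ a, f a ∂μ) * ∫ a, K a * G a ∂μ = ∫ b, K b * (G b * ∫ a, f a ∂μ) ∂μ := by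
        rw [mul_comm, ← integral_mul_const]; simp only [mul_assoc]
    _ ≤ ∫ b, K b * (A * ∫ a, f a * G a ∂μ) ∂μ :=
        integral_mono (by simpa only [mul_assoc] using hKG.mul_const (∫ a, f a ∂μ))
          (hKi.mul_const _) fun b => mul_le_mul_of_nonneg_left (hpt b) (hK b)
    _ = A * ((∫ a, K a ∂μ) * ∫ a, f a * G a ∂μ) := by rw [integral_mul_const]; ring

end

section HStep

variable [MeasurableSpace X] {ν0 : Measure X} {m : X → X → ℝ} {g : ℕ → X → ℝ} {σ D : ℝ}

lemma hStepNum_succ (n : ℕ) (x x' : X) :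
    hStepNum ν0 m g (n + 1) x x' = ∫ z : Fin n → X,
      walkDensity m x z * m (ext1 x x z n) x' * obsWeight g z ∂(Measure.pi fun _ => ν0) := by
  simp only [hStepNum, prod_range_succ_ext1, prod_Icc_ext1]
  rfl -- `Fin (n + 1 - 1)` vs `Fin n`

variable [IsFiniteMeasure ν0] [Nonempty X]

lemma hStepDen_succ (hm : IsBoundedMarkovDensity ν0 m σ) (hg : IsComparablePotential g D)
    (n : ℕ) (x : X) : hStepDen ν0 m g (n + 1) x
      = ∫ z : Fin n → X, walkDensity m x z * obsWeight g z ∂(Measure.pi fun _ => ν0) := by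
  have hF : Integrable (fun z : Fin n → X => walkDensity m x z * obsWeight g z)
      (Measure.pi fun _ => ν0) :=
    hg.integrable_mul_obsWeight (hm.integrable_walkDensity x)
  simp only [hStepDen, hStepNum_succ, mul_right_comm _ (m _ _)]
  rw [← integral_prod _ (hm.integrable_mul_prod hF (measurable_ext1 x x n)),
    hm.integral_mul_prod hF (measurable_ext1 x x n)]

lemma hStepDen_succ_pos (hm : IsBoundedMarkovDensity ν0 m σ) (hg : IsComparablePotential g D)
    (n : ℕ) (x : X) : 0 < hStepDen ν0 m g (n + 1) x := by
  rw [hStepDen_succ hm hg]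
  exact integral_mul_pos_of_pos (walkDensity_nonneg hm.nonneg x)
    (by rw [hm.integral_walkDensity]; exact one_pos)
    (hg.integrable_mul_obsWeight (hm.integrable_walkDensity x)) (obsWeight_pos hg.pos)

lemma hStepNum_succ_le (hm : IsBoundedMarkovDensity ν0 m σ) (hg : IsComparablePotential g D)
    (n : ℕ) (x x' : X) : hStepNum ν0 m g (n + 1) x x' ≤ σ * hStepDen ν0 m g (n + 1) x := by
  rw [hStepNum_succ, hStepDen_succ hm hg, ← integral_const_mul]
  refine integral_mono (hg.integrable_mul_obsWeight (hm.integrable_walkDensity_mul x x'))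
    ((hg.integrable_mul_obsWeight (hm.integrable_walkDensity x)).const_mul σ) fun z => ?_
  have hKG := mul_nonneg (walkDensity_nonneg hm.nonneg x z) (obsWeight_pos hg.pos z).le
  calc walkDensity m x z * m (ext1 x x z n) x' * obsWeight g z
      = walkDensity m x z * obsWeight g z * m (ext1 x x z n) x' := mul_right_comm _ _ _
    _ ≤ walkDensity m x z * obsWeight g z * σ := mul_le_mul_of_nonneg_left (hm.le _ _) hKG
    _ = σ * (walkDensity m x z * obsWeight g z) := mul_comm _ _

lemma mul_hStepDen_succ_le (hm : IsBoundedMarkovDensity ν0 m σ)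
    (hg : IsComparablePotential g D) {n : ℕ} {σm : ℝ} (hS1 : S1minor ν0 m (n + 1) σm)
    (x x' : X) : σm * hStepDen ν0 m g (n + 1) x ≤ D ^ n * hStepNum ν0 m g (n + 1) x x' := by
  have hf : σm ≤ ∫ z : Fin n → X, walkDensity m x z * m (ext1 x x z n) x'
      ∂(Measure.pi fun _ => ν0) := by
    have h := hS1 x x'
    simp only [prod_range_succ_ext1] at h
    exact h
  have key := integral_mul_integral_mul_le (μ := Measure.pi fun _ : Fin n => ν0)
    (fun z => mul_nonneg (walkDensity_nonneg hm.nonneg x z) (hm.nonneg _ x'))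
    (walkDensity_nonneg hm.nonneg x) (hm.integrable_walkDensity_mul x x')
    (hm.integrable_walkDensity x)
    (hg.integrable_mul_obsWeight (hm.integrable_walkDensity_mul x x'))
    (hg.integrable_mul_obsWeight (hm.integrable_walkDensity x))
    (obsWeight_le_mul hg.pos hg.le_mul)
  rw [hm.integral_walkDensity, one_mul, ← hStepDen_succ hm hg, ← hStepNum_succ] at key
  exact (mul_le_mul_of_nonneg_right hf (hStepDen_succ_pos hm hg n x).le).trans key

end HStep

end

theorem stmt16_general {X : Type*} [MeasurableSpace X]
    (ν0 : Measure X) [IsProbabilityMeasure ν0]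
    (mker : X → X → ℝ) (g : ℕ → X → ℝ)
    (h : ℕ) (hh : 1 ≤ h) (σm σp δ : ℝ)
    (hδ : 1 ≤ δ)
    -- (S1)
    (hm_meas : Measurable (Function.uncurry mker))
    (hm_nonneg : ∀ x x', 0 ≤ mker x x')
    (hm_le : ∀ x x', mker x x' ≤ σp)
    (hm_int : ∀ x, ∫ x', mker x x' ∂ν0 = 1)
    (hS1 : S1minor ν0 mker h σm)
    -- (S2)
    (hg_meas : ∀ t, Measurable (g t))
    (hg_pos : ∀ t x, 0 < g t x)
    (hg_ratio : ∀ t (x y : X), g t x ≤ δ ^ ((h : ℝ))⁻¹ * g t y) :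
    (∀ x : X, 0 < hStepDen ν0 mker g h x) ∧
    ∀ x x' : X,
      δ ^ ((1 - (h : ℝ)) / h) * σm ≤ hStepNum ν0 mker g h x x' / hStepDen ν0 mker g h x ∧
      hStepNum ν0 mker g h x x' / hStepDen ν0 mker g h x ≤ σp := by
  obtain ⟨n, rfl⟩ : ∃ n, h = n + 1 := ⟨h - 1, by omega⟩
  have : Nonempty X := nonempty_of_isProbabilityMeasure ν0
  have hm : IsBoundedMarkovDensity ν0 mker σp := ⟨hm_meas, hm_nonneg, hm_le, hm_int⟩
  have hg : IsComparablePotential g (δ ^ ((n + 1 : ℕ) : ℝ)⁻¹) := ⟨hg_meas, hg_pos, hg_ratio⟩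
  have hδ0 : 0 < δ := zero_lt_one.trans_le hδ
  have hA : 0 < (δ ^ ((n + 1 : ℕ) : ℝ)⁻¹) ^ n := pow_pos (Real.rpow_pos_of_pos hδ0 _) n
  have hexp :
      δ ^ ((1 - ((n + 1 : ℕ) : ℝ)) / (n + 1 : ℕ)) = ((δ ^ ((n + 1 : ℕ) : ℝ)⁻¹) ^ n)⁻¹ := by
    rw [← Real.rpow_natCast, ← Real.rpow_mul hδ0.le, ← Real.rpow_neg hδ0.le]
    congr 1
    push_cast
    field_simp
    ring
  have hden := hStepDen_succ_pos hm hg n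
  refine ⟨hden, fun x x' => ⟨?_, ?_⟩⟩
  · rw [hexp, le_div_iff₀ (hden x), inv_mul_eq_div, div_mul_eq_mul_div, div_le_iff₀ hA]
    exact (mul_hStepDen_succ_le hm hg hS1 x x').trans_eq (mul_comm _ _)
  · rw [div_le_iff₀ (hden x)]
    exact hStepNum_succ_le hm hg n x x'

theorem stmt16 {X : Type*} [MeasurableSpace X] [StandardBorelSpace X]
    (ν0 : Measure X) [IsProbabilityMeasure ν0]
    (mker : X → X → ℝ) (g : ℕ → X → ℝ)
    (h : ℕ) (hh : 1 ≤ h) (σm σp δ : ℝ)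
    (hσm : 0 < σm) (hσp : 0 < σp) (hδ : 1 ≤ δ)
    -- (S1)
    (hm_meas : Measurable (Function.uncurry mker))
    (hm_nonneg : ∀ x x', 0 ≤ mker x x')
    (hm_le : ∀ x x', mker x x' ≤ σp)
    (hm_int : ∀ x, ∫ x', mker x x' ∂ν0 = 1)
    (hS1 : S1minor ν0 mker h σm)
    -- (S2)
    (hg_meas : ∀ t, Measurable (g t))
    (hg_pos : ∀ t x, 0 < g t x)
    (hg_bdd : ∀ t, ∃ C, ∀ x, g t x ≤ C)
    (hg_ratio : ∀ t (x y : X), g t x ≤ δ ^ ((h : ℝ))⁻¹ * g t y) :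
    (∀ x : X, 0 < hStepDen ν0 mker g h x) ∧
    ∀ x x' : X,
      δ ^ ((1 - (h : ℝ)) / h) * σm ≤ hStepNum ν0 mker g h x x' / hStepDen ν0 mker g h x ∧
      hStepNum ν0 mker g h x x' / hStepDen ν0 mker g h x ≤ σp :=
  stmt16_general ν0 mker g h hh σm σp δ hδ hm_meas hm_nonneg hm_le hm_int hS1 hg_meas hg_pos
    hg_ratio
end
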